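/- Let n ≥ 1 and μ > 0. Let f : ℝⁿ → ℝ be Lipschitz continuous with constant L₁ and differentiable with gradient Lipschitz continuous with constant L₂ (Assumptions 1 and 2), let f_μ(a) = E_{v∼U_b}[f(a + μ·v)] be its ball-smoothing, and let a* minimize f over the box [0,1]ⁿ. On a probability space with a filtration (ℱ_t)_{t≥0}, let a_0 ∈ [0,1]ⁿ be ℱ_0-measurable, and for t = 0,…,T−1 let ĝ_t be a square-integrable random vector in ℝⁿ with E[ĝ_t | ℱ_t] = ∇f_μ(a_t) almost surely, and set a_{t+1} = P_[0,1](a_t − η_t·ĝ_t) (coordinatewise clamping to [0,1]), where each step size satisfies η_t ∈ (0, 1/L₂) and a_t is ℱ_t-measurable. Define the rectified gradient G_t = (a_t − a_{t+1})/η_t. Then ∑_{t=0}^{T−1} (2η_t − L₂·η_t²)·E[‖G_t‖²] ≤ 2·∑_{t=0}^{T−1} η_t·E[‖ĝ_t − ∇f_μ(a_t)‖²] + 2μ²·L₂ + 2(f(a_0) − f(a*)). (Lemma 3.) -/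

import Mathlib

/-!
The ball smoothing `f_μ` inherits the Lipschitz constants of `f` and of `∇f`, and since the
first-order term averages out over the centred ball, `|f_μ - f| ≤ L₂ μ² / 2`.
For the `L₂`-smooth `f_μ`, one projected step obeys, by the variational inequality of the
projection, its nonexpansiveness and the descent lemma,
`(η - L₂ η² / 2) ‖G‖² ≤ f_μ(a) - f_μ(a⁺) + η ⟪ĝ - ∇f_μ(a), Ḡ⟫ + η ‖ĝ - ∇f_μ(a)‖²`,
where `Ḡ` is the rectified gradient of the exact step from `a` along `∇f_μ(a)`. Since `Ḡ` is
`ℱ_t`-measurable, the cross term has expectation zero. Summing over `t` telescopes, and the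
smoothing bias at both endpoints, together with the minimality of `a*`, costs `2 μ² L₂`.
-/

open MeasureTheory

/-- The uniform probability measure on the closed unit Euclidean ball in `ℝⁿ`:
Lebesgue measure restricted to the ball, normalized to total mass one. -/
noncomputable def ballUniform (n : ℕ) : Measure (EuclideanSpace ℝ (Fin n)) :=
  (volume (Metric.closedBall (0 : EuclideanSpace ℝ (Fin n)) 1))⁻¹ •
    volume.restrict (Metric.closedBall (0 : EuclideanSpace ℝ (Fin n)) 1)

/-- Coordinatewise projection of `ℝⁿ` onto the box `[0,1]ⁿ`. -/
def clamp01 (n : ℕ) (x : EuclideanSpace ℝ (Fin n)) : EuclideanSpace ℝ (Fin n) :=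
  WithLp.toLp 2 (fun i => min 1 (max 0 (x i)))

open scoped NNReal RealInnerProductSpace

section Smooth
variable {F : Type*} [NormedAddCommGroup F] [InnerProductSpace ℝ F] [CompleteSpace F]

lemma norm_gradient_le_of_lipschitzWith {f : F → ℝ} {L : ℝ≥0} (hf : LipschitzWith L f) (x : F) :
    ‖gradient f x‖ ≤ L := by
  rw [gradient, LinearIsometryEquiv.norm_map]
  exact norm_fderiv_le_of_lipschitz ℝ hf

lemma abs_sub_sub_inner_gradient_le {f : F → ℝ} {L : ℝ≥0} (hdiff : Differentiable ℝ f)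
    (hgrad : LipschitzWith L (gradient f)) (x y : F) :
    |f y - f x - ⟪gradient f x, y - x⟫| ≤ L / 2 * ‖y - x‖ ^ 2 := by
  set d := y - x
  have hderiv (t : ℝ) : HasDerivAt (fun s : ℝ => f (x + s • d) - f x - s * ⟪gradient f x, d⟫)
      (⟪gradient f (x + t • d) - gradient f x, d⟫) t := by
    have hline : HasDerivAt (fun s : ℝ => x + s • d) d t := by
      simpa using ((hasDerivAt_id t).smul_const d).const_add x
    have := (((hdiff _).hasFDerivAt.comp_hasDerivAt t hline).sub_const (f x)).sub
      ((hasDerivAt_id t).mul_const ⟪gradient f x, d⟫)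
    refine this.congr_deriv ?_
    simp [inner_sub_left, gradient, InnerProductSpace.toDual_symm_apply]
  have hbound (t : ℝ) : HasDerivAt (fun s : ℝ => L / 2 * ‖d‖ ^ 2 * s ^ 2) (L * ‖d‖ ^ 2 * t) t := by
    refine ((hasDerivAt_pow 2 t).const_mul (L / 2 * ‖d‖ ^ 2)).congr_deriv ?_
    norm_num; ring
  have hslope (t : ℝ) (ht : t ∈ Set.Ico (0 : ℝ) 1) :
      ‖⟪gradient f (x + t • d) - gradient f x, d⟫‖ ≤ L * ‖d‖ ^ 2 * t :=
    calc ‖⟪gradient f (x + t • d) - gradient f x, d⟫‖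
        ≤ ‖gradient f (x + t • d) - gradient f x‖ * ‖d‖ := norm_inner_le_norm _ _
      _ ≤ L * ‖t • d‖ * ‖d‖ := by
          gcongr
          simpa [dist_eq_norm] using hgrad.dist_le_mul (x + t • d) x
      _ = L * ‖d‖ ^ 2 * t := by rw [norm_smul, Real.norm_of_nonneg ht.1]; ring
  simpa [d] using image_norm_le_of_norm_deriv_right_le_deriv_boundary
    (fun t _ => (hderiv t).continuousAt.continuousWithinAt)
    (fun t _ => (hderiv t).hasDerivWithinAt) (by simp) hbound hslope
    (Set.right_mem_Icc.2 zero_le_one)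

end Smooth

lemma LipschitzWith.integrable_comp_of_ae_norm_le {Ω E G : Type*} {mΩ : MeasurableSpace Ω}
    {ℙ : Measure Ω} [IsFiniteMeasure ℙ] [SeminormedAddCommGroup E] [NormedAddCommGroup G]
    {g : E → G} {K : ℝ≥0} (hg : LipschitzWith K g) {X : Ω → E} (hX : AEStronglyMeasurable X ℙ)
    {C : ℝ} (hXC : ∀ᵐ ω ∂ℙ, ‖X ω‖ ≤ C) : Integrable (fun ω => g (X ω)) ℙ := by
  refine .of_bound (hg.continuous.comp_aestronglyMeasurable hX) (‖g 0‖ + K * C) ?_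
  filter_upwards [hXC] with ω hω
  have := hg.norm_sub_le (X ω) 0
  rw [sub_zero] at this
  linarith [norm_le_insert' (g (X ω)) (g 0), mul_le_mul_of_nonneg_left hω K.coe_nonneg]

lemma norm_add_smul_le_of_norm_le_one {F : Type*} [SeminormedAddCommGroup F] [NormedSpace ℝ F]
    (x : F) {v : F} (μ : ℝ) (hv : ‖v‖ ≤ 1) : ‖x + μ • v‖ ≤ ‖x‖ + |μ| :=
  calc ‖x + μ • v‖ ≤ ‖x‖ + |μ| * ‖v‖ := by
        rw [← Real.norm_eq_abs, ← norm_smul]; exact norm_add_le _ _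
    _ ≤ ‖x‖ + |μ| := by gcongr; exact mul_le_of_le_one_right (abs_nonneg μ) hv

noncomputable def smoothing {F : Type*} [NormedAddCommGroup F] [NormedSpace ℝ F]
    [MeasurableSpace F] (ν : Measure F) (μ : ℝ) (f : F → ℝ) (x : F) : ℝ :=
  ∫ v, f (x + μ • v) ∂ν

section IntegralCompAddSmul
variable {F : Type*} [NormedAddCommGroup F] [NormedSpace ℝ F] [MeasurableSpace F] [BorelSpace F]
  [SecondCountableTopology F] {ν : Measure F} [IsProbabilityMeasure ν] {μ : ℝ}
  (hν : ∀ᵐ v ∂ν, ‖v‖ ≤ 1)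
include hν

lemma LipschitzWith.integrable_comp_add_smul {G : Type*} [NormedAddCommGroup G] {g : F → G}
    {K : ℝ≥0} (hg : LipschitzWith K g) (x : F) : Integrable (fun v => g (x + μ • v)) ν :=
  hg.integrable_comp_of_ae_norm_le (by fun_prop)
    (hν.mono fun _ hv => norm_add_smul_le_of_norm_le_one x μ hv)

lemma LipschitzWith.integral_comp_add_smul {G : Type*} [NormedAddCommGroup G] [NormedSpace ℝ G]
    {g : F → G} {K : ℝ≥0} (hg : LipschitzWith K g) :
    LipschitzWith K (fun x => ∫ v, g (x + μ • v) ∂ν) := by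
  refine LipschitzWith.of_dist_le_mul fun x y => ?_
  rw [dist_eq_norm, ← integral_sub (hg.integrable_comp_add_smul hν x)
    (hg.integrable_comp_add_smul hν y)]
  refine (norm_integral_le_of_norm_le_const (C := K * dist x y)
    (Filter.Eventually.of_forall fun v => ?_)).trans (by simp)
  simpa [dist_eq_norm] using hg.dist_le_mul (x + μ • v) (y + μ • v)

lemma lipschitzWith_smoothing {f : F → ℝ} {L : ℝ≥0} (hf : LipschitzWith L f) :
    LipschitzWith L (smoothing ν μ f) :=
  hf.integral_comp_add_smul hν

end IntegralCompAddSmul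

section Smoothing
variable {F : Type*} [NormedAddCommGroup F] [InnerProductSpace ℝ F] [CompleteSpace F]
  [MeasurableSpace F] [BorelSpace F] [SecondCountableTopology F]
  {ν : Measure F} [IsProbabilityMeasure ν] {μ : ℝ} {f : F → ℝ} {L₁ L₂ : ℝ≥0}
  (hν : ∀ᵐ v ∂ν, ‖v‖ ≤ 1)
include hν

lemma hasGradientAt_smoothing (hf : LipschitzWith L₁ f) (hdiff : Differentiable ℝ f)
    (hgrad : Continuous (gradient f)) (x₀ : F) :
    HasGradientAt (smoothing ν μ f) (∫ v, gradient f (x₀ + μ • v) ∂ν) x₀ := by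
  have hfderiv : fderiv ℝ f = fun x => InnerProductSpace.toDual ℝ F (gradient f x) := by
    ext; simp [gradient]
  have hF : HasFDerivAt (smoothing ν μ f) (∫ v, fderiv ℝ f (x₀ + μ • v) ∂ν) x₀ := by
    refine hasFDerivAt_integral_of_dominated_of_fderiv_le (bound := fun _ => (L₁ : ℝ))
      (F' := fun x v => fderiv ℝ f (x + μ • v)) (Metric.ball_mem_nhds x₀ one_pos)
      (Filter.Eventually.of_forall fun x => (hf.continuous.comp (by fun_prop)).aestronglyMeasurable)
      (hf.integrable_comp_add_smul hν x₀) ?_ ?_ (integrable_const _) ?_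
    · rw [hfderiv]; fun_prop
    · exact Filter.Eventually.of_forall fun v x _ => norm_fderiv_le_of_lipschitz ℝ hf
    · exact Filter.Eventually.of_forall fun v x _ =>
        (hdiff _).hasFDerivAt.comp x ((hasFDerivAt_id x).add_const (μ • v))
  have hcomm := (InnerProductSpace.toDual ℝ F).toLinearIsometry.integral_comp_comm
    (fun v => gradient f (x₀ + μ • v)) (μ := ν)
  simp only [LinearIsometryEquiv.coe_toLinearIsometry] at hcomm
  rw [hasGradientAt_iff_hasFDerivAt, ← hcomm]
  simpa only [hfderiv] using hF

lemma gradient_smoothing (hf : LipschitzWith L₁ f) (hdiff : Differentiable ℝ f)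
    (hgrad : Continuous (gradient f)) :
    gradient (smoothing ν μ f) = fun x => ∫ v, gradient f (x + μ • v) ∂ν :=
  funext fun x => (hasGradientAt_smoothing hν hf hdiff hgrad x).gradient

lemma differentiable_smoothing (hf : LipschitzWith L₁ f) (hdiff : Differentiable ℝ f)
    (hgrad : Continuous (gradient f)) : Differentiable ℝ (smoothing ν μ f) :=
  fun x => (hasGradientAt_smoothing hν hf hdiff hgrad x).differentiableAt

lemma lipschitzWith_gradient_smoothing (hf : LipschitzWith L₁ f) (hdiff : Differentiable ℝ f)
    (hgrad : LipschitzWith L₂ (gradient f)) : LipschitzWith L₂ (gradient (smoothing ν μ f)) := by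
  rw [gradient_smoothing hν hf hdiff hgrad.continuous]
  exact hgrad.integral_comp_add_smul hν

lemma abs_smoothing_sub_le (hf : LipschitzWith L₁ f) (hdiff : Differentiable ℝ f)
    (hgrad : LipschitzWith L₂ (gradient f)) (hmean : ∫ v, v ∂ν = 0) (x : F) :
    |smoothing ν μ f x - f x| ≤ L₂ / 2 * μ ^ 2 := by
  have hid : Integrable (fun v : F => μ • v) ν :=
    (Integrable.of_bound aestronglyMeasurable_id 1 hν).smul μ
  have hlin : ∫ v, ⟪gradient f x, μ • v⟫ ∂ν = 0 := by
    rw [integral_inner hid, integral_smul, hmean, smul_zero, inner_zero_right]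
  have hsplit : smoothing ν μ f x - f x =
      ∫ v, (f (x + μ • v) - f x - ⟪gradient f x, μ • v⟫) ∂ν := by
    have hint : Integrable (fun v => f (x + μ • v) - f x) ν :=
      (hf.integrable_comp_add_smul hν x).sub (integrable_const _)
    rw [integral_sub hint (hid.const_inner _), hlin, integral_sub (hf.integrable_comp_add_smul hν x)
      (integrable_const _), integral_const, smoothing]
    simp
  rw [hsplit, ← Real.norm_eq_abs]
  refine (norm_integral_le_of_norm_le_const (C := L₂ / 2 * μ ^ 2) ?_).trans (by simp)
  filter_upwards [hν] with v hv
  calc ‖f (x + μ • v) - f x - ⟪gradient f x, μ • v⟫‖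
      ≤ L₂ / 2 * ‖μ • v‖ ^ 2 := by
        simpa using abs_sub_sub_inner_gradient_le hdiff hgrad x (x + μ • v)
    _ ≤ L₂ / 2 * μ ^ 2 := by
        rw [norm_smul, mul_pow, Real.norm_eq_abs, sq_abs]
        gcongr
        exact mul_le_of_le_one_right (sq_nonneg μ) (pow_le_one₀ (norm_nonneg v) hv)

end Smoothing

noncomputable def rectifiedGradient {F : Type*} [NormedAddCommGroup F] [NormedSpace ℝ F]
    (P : F → F) (η : ℝ) (x g : F) : F :=
  η⁻¹ • (x - P (x - η • g))

section RectifiedGradient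
variable {F : Type*} [NormedAddCommGroup F] [InnerProductSpace ℝ F] {P : F → F} {η : ℝ}
  {x g d : F}

lemma sub_smul_rectifiedGradient (hη : η ≠ 0) :
    x - η • rectifiedGradient P η x g = P (x - η • g) := by
  rw [rectifiedGradient, smul_inv_smul₀ hη, sub_sub_cancel]

lemma norm_rectifiedGradient_sub_le (hP : LipschitzWith 1 P) (hη : 0 < η) :
    ‖rectifiedGradient P η x g - rectifiedGradient P η x d‖ ≤ ‖g - d‖ := by
  have hPd := hP.norm_sub_le (x - η • d) (x - η • g)
  rw [sub_sub_sub_cancel_left, ← smul_sub, norm_smul, Real.norm_of_nonneg hη.le,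
    NNReal.coe_one, one_mul] at hPd
  rw [rectifiedGradient, rectifiedGradient, ← smul_sub, sub_sub_sub_cancel_left, norm_smul,
    Real.norm_of_nonneg (inv_nonneg.2 hη.le)]
  exact (inv_mul_le_iff₀ hη).2 hPd

lemma norm_sq_rectifiedGradient_le_inner (hη : 0 < η)
    (hPx : ∀ y, ⟪y - P y, x - P y⟫ ≤ 0) :
    ‖rectifiedGradient P η x g‖ ^ 2 ≤ ⟪g, rectifiedGradient P η x g⟫ := by
  have h := hPx (x - η • g)
  rw [← sub_smul_rectifiedGradient (P := P) hη.ne', sub_sub_sub_cancel_left, sub_sub_cancel,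
    ← smul_sub, real_inner_smul_left, real_inner_smul_right, inner_sub_left,
    real_inner_self_eq_norm_sq, ← mul_assoc] at h
  linarith [nonpos_of_mul_nonpos_right h (mul_pos hη hη)]

lemma norm_rectifiedGradient_le (hP : LipschitzWith 1 P) (hη : 0 < η)
    (hPx : ∀ y, ⟪y - P y, x - P y⟫ ≤ 0) : ‖rectifiedGradient P η x g‖ ≤ ‖g‖ := by
  have hfix : P x = x := by
    have := hPx x
    rwa [real_inner_self_nonpos, sub_eq_zero, eq_comm] at this
  simpa [rectifiedGradient, hfix] using norm_rectifiedGradient_sub_le (x := x) (d := 0) hP hη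

lemma rectifiedGradient_descent {φ : F → ℝ} {L : ℝ} (hP : LipschitzWith 1 P) (hη : 0 < η)
    (hPx : ∀ y, ⟪y - P y, x - P y⟫ ≤ 0)
    (hφ : ∀ y, φ y ≤ φ x + ⟪d, y - x⟫ + L / 2 * ‖y - x‖ ^ 2) :
    (η - L * η ^ 2 / 2) * ‖rectifiedGradient P η x g‖ ^ 2 ≤
      φ x - φ (P (x - η • g)) + η * ⟪g - d, rectifiedGradient P η x d⟫ + η * ‖g - d‖ ^ 2 := by
  set G := rectifiedGradient P η x g
  set D := rectifiedGradient P η x d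
  have hG : ‖G‖ ^ 2 ≤ ⟪g, G⟫ := norm_sq_rectifiedGradient_le_inner hη hPx
  have hstep : φ (P (x - η • g)) ≤ φ x - η * ⟪d, G⟫ + L / 2 * (η ^ 2 * ‖G‖ ^ 2) := by
    have := hφ (x - η • G)
    rwa [sub_sub_cancel_left, inner_neg_right, real_inner_smul_right, norm_neg, norm_smul,
      mul_pow, Real.norm_eq_abs, sq_abs, ← sub_eq_add_neg, sub_smul_rectifiedGradient hη.ne']
      at this
  have hcross : ⟪g - d, G - D⟫ ≤ ‖g - d‖ ^ 2 := by
    rw [sq]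
    exact (real_inner_le_norm _ _).trans
      (mul_le_mul_of_nonneg_left (norm_rectifiedGradient_sub_le hP hη) (norm_nonneg _))
  have hsplit : ⟪g, G⟫ = ⟪d, G⟫ + ⟪g - d, D⟫ + ⟪g - d, G - D⟫ := by
    simp only [inner_sub_left, inner_sub_right]; ring
  nlinarith [mul_le_mul_of_nonneg_left hG hη.le, mul_le_mul_of_nonneg_left hcross hη.le]

end RectifiedGradient

lemma continuous_rectifiedGradient {F : Type*} [NormedAddCommGroup F] [NormedSpace ℝ F]
    {P : F → F} (hP : Continuous P) (η : ℝ) :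
    Continuous fun p : F × F => rectifiedGradient P η p.1 p.2 := by
  unfold rectifiedGradient; fun_prop

section Inner
variable {Ω F : Type*} {m mΩ : MeasurableSpace Ω} {ℙ : Measure Ω} [NormedAddCommGroup F]
  [InnerProductSpace ℝ F]

lemma MeasureTheory.Integrable.inner_of_ae_norm_le {X Z : Ω → F} (hX : Integrable X ℙ)
    (hZ : AEStronglyMeasurable Z ℙ) {C : ℝ} (hZC : ∀ᵐ ω ∂ℙ, ‖Z ω‖ ≤ C) :
    Integrable (fun ω => ⟪X ω, Z ω⟫) ℙ :=
  (hX.norm.mul_const C).mono' (hX.aestronglyMeasurable.inner hZ) (hZC.mono fun _ h =>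
    (norm_inner_le_norm _ _).trans (mul_le_mul_of_nonneg_left h (norm_nonneg _)))

lemma integral_inner_sub_eq_zero_of_condExp_eq [IsFiniteMeasure ℙ] [CompleteSpace F]
    (hm : m ≤ mΩ) {X Y Z : Ω → F} (hX : Integrable X ℙ) (hY : Integrable Y ℙ)
    (hZ : StronglyMeasurable[m] Z) {C : ℝ} (hZC : ∀ ω, ‖Z ω‖ ≤ C) (hXY : ℙ[X|m] =ᵐ[ℙ] Y) :
    ∫ ω, ⟪X ω - Y ω, Z ω⟫ ∂ℙ = 0 := by
  have hZ' : AEStronglyMeasurable Z ℙ := (hZ.mono hm).aestronglyMeasurable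
  have hXZ := hX.inner_of_ae_norm_le hZ' (ae_of_all _ hZC)
  simp_rw [inner_sub_left]
  rw [integral_sub hXZ (hY.inner_of_ae_norm_le hZ' (ae_of_all _ hZC)), sub_eq_zero,
    ← integral_condExp hm]
  refine integral_congr_ae ?_
  filter_upwards [condExp_bilin_of_stronglyMeasurable_right (innerSL ℝ) hZ hXZ hX, hXY]
    with ω hpull hω
  rw [← hω]; exact hpull

end Inner

lemma Finset.sum_range_le_of_le_sub_succ {c e Φ : ℕ → ℝ} {T : ℕ}
    (h : ∀ t < T, c t ≤ Φ t - Φ (t + 1) + e t) :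
    ∑ t ∈ Finset.range T, c t ≤ Φ 0 - Φ T + ∑ t ∈ Finset.range T, e t := by
  calc ∑ t ∈ Finset.range T, c t ≤ ∑ t ∈ Finset.range T, (Φ t - Φ (t + 1) + e t) :=
        Finset.sum_le_sum fun t ht => h t (Finset.mem_range.1 ht)
    _ = Φ 0 - Φ T + ∑ t ∈ Finset.range T, e t := by
        rw [Finset.sum_add_distrib, Finset.sum_range_sub']

lemma integral_sub_integral_le_of_abs_sub_le {Ω E : Type*} {mΩ : MeasurableSpace Ω}
    {ℙ : Measure Ω} [IsProbabilityMeasure ℙ] {φ f : E → ℝ} {c : ℝ} (hc : ∀ x, |φ x - f x| ≤ c)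
    {X Y : Ω → E} (hφX : Integrable (fun ω => φ (X ω)) ℙ) (hφY : Integrable (fun ω => φ (Y ω)) ℙ)
    (hfX : Integrable (fun ω => f (X ω)) ℙ) {m : ℝ} (hm : ∀ ω, m ≤ f (Y ω)) :
    ∫ ω, φ (X ω) ∂ℙ - ∫ ω, φ (Y ω) ∂ℙ ≤ ∫ ω, f (X ω) ∂ℙ - m + 2 * c :=
  calc ∫ ω, φ (X ω) ∂ℙ - ∫ ω, φ (Y ω) ∂ℙ = ∫ ω, (φ (X ω) - φ (Y ω)) ∂ℙ :=
        (integral_sub hφX hφY).symm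
    _ ≤ ∫ ω, (f (X ω) - (m - 2 * c)) ∂ℙ :=
        integral_mono (hφX.sub hφY) (hfX.sub (integrable_const _)) fun ω => by
          linarith [(abs_le.1 (hc (X ω))).2, (abs_le.1 (hc (Y ω))).1, hm ω]
    _ = ∫ ω, f (X ω) ∂ℙ - m + 2 * c := by
        rw [integral_sub hfX (integrable_const _), integral_const, probReal_univ, one_smul]
        ring

section ExpectedDescent
variable {Ω : Type*} {m mΩ : MeasurableSpace Ω} {ℙ : Measure Ω} [IsProbabilityMeasure ℙ]
  {F : Type*} [NormedAddCommGroup F] [InnerProductSpace ℝ F] [CompleteSpace F]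

lemma integral_rectifiedGradient_descent (hm : m ≤ mΩ) {φ : F → ℝ} {L₁ L₂ : ℝ≥0}
    (hφ : LipschitzWith L₁ φ) (hφd : Differentiable ℝ φ) (hgrad : LipschitzWith L₂ (gradient φ))
    {P : F → F} (hP : LipschitzWith 1 P) {A X : Ω → F} (hAP : ∀ ω y, ⟪y - P y, A ω - P y⟫ ≤ 0)
    (hA : StronglyMeasurable[m] A) (hX : MemLp X 2 ℙ)
    (hXA : ℙ[X|m] =ᵐ[ℙ] fun ω => gradient φ (A ω)) {η : ℝ} (hη : 0 < η)
    (hφA : Integrable (fun ω => φ (A ω)) ℙ)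
    (hφA' : Integrable (fun ω => φ (P (A ω - η • X ω))) ℙ) :
    (η - L₂ * η ^ 2 / 2) * ∫ ω, ‖rectifiedGradient P η (A ω) (X ω)‖ ^ 2 ∂ℙ ≤
      ∫ ω, φ (A ω) ∂ℙ - ∫ ω, φ (P (A ω - η • X ω)) ∂ℙ +
        η * ∫ ω, ‖X ω - gradient φ (A ω)‖ ^ 2 ∂ℙ := by
  set G := fun ω => rectifiedGradient P η (A ω) (X ω)
  set D := fun ω => rectifiedGradient P η (A ω) (gradient φ (A ω))
  set δ := fun ω => X ω - gradient φ (A ω)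
  have hgrad_le (x : F) : ‖gradient φ x‖ ≤ L₁ := norm_gradient_le_of_lipschitzWith hφ x
  have hA' : AEStronglyMeasurable A ℙ := (hA.mono hm).aestronglyMeasurable
  have hgradA : MemLp (fun ω => gradient φ (A ω)) 2 ℙ :=
    .of_bound (hgrad.continuous.comp_aestronglyMeasurable hA') L₁ (ae_of_all _ fun _ => hgrad_le _)
  have hD : StronglyMeasurable[m] D :=
    ((continuous_rectifiedGradient hP.continuous η).comp
      (continuous_id.prodMk hgrad.continuous)).comp_stronglyMeasurable hA
  have hD_le (ω : Ω) : ‖D ω‖ ≤ L₁ := (norm_rectifiedGradient_le hP hη (hAP ω)).trans (hgrad_le _)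
  have hδ : MemLp δ 2 ℙ := hX.sub hgradA
  have hG : AEStronglyMeasurable G ℙ :=
    (continuous_rectifiedGradient hP.continuous η).comp_aestronglyMeasurable₂ hA'
      hX.aestronglyMeasurable
  have hG2 : Integrable (fun ω => ‖G ω‖ ^ 2) ℙ := by
    refine (hX.integrable_norm_pow two_ne_zero).mono' (hG.norm.pow 2) (ae_of_all _ fun ω => ?_)
    rw [Real.norm_of_nonneg (by positivity)]
    exact pow_le_pow_left₀ (norm_nonneg _) (norm_rectifiedGradient_le hP hη (hAP ω)) 2
  have hδ2 : Integrable (fun ω => ‖δ ω‖ ^ 2) ℙ := hδ.integrable_norm_pow two_ne_zero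
  have hδD : Integrable (fun ω => ⟪δ ω, D ω⟫) ℙ :=
    (hδ.integrable one_le_two).inner_of_ae_norm_le (hD.mono hm).aestronglyMeasurable
      (ae_of_all _ hD_le)
  have hcross : ∫ ω, ⟪δ ω, D ω⟫ ∂ℙ = 0 :=
    integral_inner_sub_eq_zero_of_condExp_eq hm (hX.integrable one_le_two)
      (hgradA.integrable one_le_two) hD hD_le hXA
  have hpointwise (ω : Ω) : (η - L₂ * η ^ 2 / 2) * ‖G ω‖ ^ 2 ≤
      φ (A ω) - φ (P (A ω - η • X ω)) + η * ⟪δ ω, D ω⟫ + η * ‖δ ω‖ ^ 2 :=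
    rectifiedGradient_descent hP hη (hAP ω) fun y => by
      linarith [(abs_le.1 (abs_sub_sub_inner_gradient_le hφd hgrad (A ω) y)).2]
  calc (η - L₂ * η ^ 2 / 2) * ∫ ω, ‖G ω‖ ^ 2 ∂ℙ
      = ∫ ω, (η - L₂ * η ^ 2 / 2) * ‖G ω‖ ^ 2 ∂ℙ := (integral_const_mul _ _).symm
    _ ≤ ∫ ω, (φ (A ω) - φ (P (A ω - η • X ω)) + η * ⟪δ ω, D ω⟫ + η * ‖δ ω‖ ^ 2) ∂ℙ :=
        integral_mono (hG2.const_mul _)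
          (((hφA.sub hφA').add (hδD.const_mul η)).add (hδ2.const_mul η)) hpointwise
    _ = _ := by
        rw [integral_add, integral_add, integral_sub hφA hφA', integral_const_mul,
          integral_const_mul, hcross, mul_zero, add_zero]
        exacts [hφA.sub hφA', hδD.const_mul η, (hφA.sub hφA').add (hδD.const_mul η),
          hδ2.const_mul η]

lemma sum_mul_integral_norm_sq_le_of_projected_step (ℱ : Filtration ℕ mΩ) {φ : F → ℝ}
    {L₁ L₂ : ℝ≥0} (hφ : LipschitzWith L₁ φ) (hφd : Differentiable ℝ φ)
    (hgrad : LipschitzWith L₂ (gradient φ)) {P : F → F} (hP : LipschitzWith 1 P) {K : Set F}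
    (hK : ∀ x ∈ K, ∀ y, ⟪y - P y, x - P y⟫ ≤ 0) {T : ℕ} {η : ℕ → ℝ} (hη : ∀ t < T, 0 < η t)
    {a X G : ℕ → Ω → F} (haK : ∀ t < T, ∀ ω, a t ω ∈ K)
    (ha : ∀ t < T, StronglyMeasurable[ℱ t] (a t)) (hX : ∀ t < T, MemLp (X t) 2 ℙ)
    (hXa : ∀ t < T, ℙ[X t|ℱ t] =ᵐ[ℙ] fun ω => gradient φ (a t ω))
    (hrec : ∀ t < T, ∀ ω, a (t + 1) ω = P (a t ω - η t • X t ω))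
    (hG : ∀ t < T, ∀ ω, G t ω = (η t)⁻¹ • (a t ω - a (t + 1) ω))
    (hφa : ∀ t ≤ T, Integrable (fun ω => φ (a t ω)) ℙ) :
    ∑ t ∈ Finset.range T, (2 * η t - L₂ * η t ^ 2) * ∫ ω, ‖G t ω‖ ^ 2 ∂ℙ ≤
      2 * ∑ t ∈ Finset.range T, η t * ∫ ω, ‖X t ω - gradient φ (a t ω)‖ ^ 2 ∂ℙ +
        2 * (∫ ω, φ (a 0 ω) ∂ℙ - ∫ ω, φ (a T ω) ∂ℙ) := by
  have hstep : ∀ t < T, (η t - L₂ * η t ^ 2 / 2) * ∫ ω, ‖G t ω‖ ^ 2 ∂ℙ ≤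
      ∫ ω, φ (a t ω) ∂ℙ - ∫ ω, φ (a (t + 1) ω) ∂ℙ +
        η t * ∫ ω, ‖X t ω - gradient φ (a t ω)‖ ^ 2 ∂ℙ := by
    intro t ht
    have hnext := hφa (t + 1) ht
    simp only [hG t ht, hrec t ht] at hnext ⊢
    exact integral_rectifiedGradient_descent (ℱ.le t) hφ hφd hgrad hP
      (fun ω => hK _ (haK t ht ω)) (ha t ht) (hX t ht) (hXa t ht) (hη t ht) (hφa t ht.le) hnext
  calc ∑ t ∈ Finset.range T, (2 * η t - L₂ * η t ^ 2) * ∫ ω, ‖G t ω‖ ^ 2 ∂ℙ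
      = 2 * ∑ t ∈ Finset.range T, (η t - L₂ * η t ^ 2 / 2) * ∫ ω, ‖G t ω‖ ^ 2 ∂ℙ := by
        rw [Finset.mul_sum]
        exact Finset.sum_congr rfl fun t _ => by ring
    _ ≤ _ := by linarith [Finset.sum_range_le_of_le_sub_succ hstep]

end ExpectedDescent

instance (n : ℕ) : IsProbabilityMeasure (ballUniform n) := by
  constructor
  rw [ballUniform, Measure.smul_apply, Measure.restrict_apply_univ, smul_eq_mul]
  exact ENNReal.inv_mul_cancel (Metric.measure_closedBall_pos _ _ one_pos).ne'
    measure_closedBall_lt_top.ne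

instance (n : ℕ) : (ballUniform n).IsNegInvariant where
  neg_eq_self := by
    have hB : Neg.neg ⁻¹' Metric.closedBall (0 : EuclideanSpace ℝ (Fin n)) 1 =
        Metric.closedBall 0 1 := by ext; simp
    rw [Measure.neg, ballUniform, Measure.map_smul, ← hB,
      ← Measure.restrict_map measurable_neg measurableSet_closedBall, hB,
      Measure.map_neg_eq_self]

lemma ae_norm_le_one_ballUniform (n : ℕ) : ∀ᵐ v ∂(ballUniform n), ‖v‖ ≤ 1 := by
  refine Measure.ae_smul_measure ?_ _
  filter_upwards [ae_restrict_mem measurableSet_closedBall] with v hv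
  simpa using hv

lemma integral_id_ballUniform (n : ℕ) : ∫ v, v ∂(ballUniform n) = 0 := by
  have h := integral_neg_eq_self (fun v => v) (ballUniform n)
  rw [integral_neg] at h
  linear_combination (norm := module) (-1 / 2 : ℝ) • h

section Clamp
variable {n : ℕ}

@[simp]
lemma clamp01_apply (x : EuclideanSpace ℝ (Fin n)) (i : Fin n) :
    clamp01 n x i = min 1 (max 0 (x i)) := rfl

lemma clamp01_mem_Icc (x : EuclideanSpace ℝ (Fin n)) (i : Fin n) :
    clamp01 n x i ∈ Set.Icc (0 : ℝ) 1 := by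
  simp

lemma lipschitzWith_clamp01 : LipschitzWith 1 (clamp01 n) := by
  have hcoord : LipschitzWith 1 fun t : ℝ => min 1 (max 0 t) :=
    (LipschitzWith.id.const_max 0).const_min 1
  refine LipschitzWith.of_dist_le_mul fun x y => ?_
  rw [NNReal.coe_one, one_mul, EuclideanSpace.dist_eq, EuclideanSpace.dist_eq]
  gcongr with i
  simpa using hcoord.dist_le_mul (x i) (y i)

lemma inner_sub_clamp01_nonpos {z : EuclideanSpace ℝ (Fin n)} (hz : ∀ i, z i ∈ Set.Icc (0 : ℝ) 1)
    (x : EuclideanSpace ℝ (Fin n)) : ⟪x - clamp01 n x, z - clamp01 n x⟫ ≤ 0 := by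
  simp only [PiLp.inner_apply, PiLp.sub_apply, clamp01_apply, RCLike.inner_apply, conj_trivial]
  refine Finset.sum_nonpos fun i _ => ?_
  obtain ⟨hz0, hz1⟩ := hz i
  rcases le_total (x i) 0 with hx | hx <;> rcases le_total (x i) 1 with hx' | hx' <;>
    simp [hx, hx'] <;> nlinarith

lemma norm_le_sqrt_of_forall_mem_Icc {x : EuclideanSpace ℝ (Fin n)}
    (hx : ∀ i, x i ∈ Set.Icc (0 : ℝ) 1) : ‖x‖ ≤ √n := by
  rw [EuclideanSpace.norm_eq]
  gcongr
  calc ∑ i, ‖x i‖ ^ 2 ≤ ∑ _i : Fin n, (1 : ℝ) := by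
        gcongr with i
        rw [Real.norm_of_nonneg (hx i).1]
        exact pow_le_one₀ (hx i).1 (hx i).2
    _ = n := by simp

end Clamp

theorem zeroth_order_pgd_descent_bound_general
    {Ω : Type*} {mΩ : MeasurableSpace Ω} (ℙ : Measure Ω) [IsProbabilityMeasure ℙ]
    (n : ℕ)
    (f : EuclideanSpace ℝ (Fin n) → ℝ)
    (L₁ L₂ : NNReal)
    (hf : LipschitzWith L₁ f)
    (hdiff : Differentiable ℝ f)
    (hgrad : LipschitzWith L₂ (gradient f))
    (μ : ℝ)
    (fμ : EuclideanSpace ℝ (Fin n) → ℝ)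
    (hfμ : ∀ x, fμ x = ∫ v, f (x + μ • v) ∂(ballUniform n))
    (box : Set (EuclideanSpace ℝ (Fin n)))
    (hbox : box = {x | ∀ i, x i ∈ Set.Icc (0 : ℝ) 1})
    (astar : EuclideanSpace ℝ (Fin n))
    (hmin : ∀ x ∈ box, f astar ≤ f x)
    (ℱ : Filtration ℕ mΩ) (T : ℕ)
    (η : ℕ → ℝ) (hη : ∀ t < T, η t ∈ Set.Ioo (0 : ℝ) (1 / (L₂ : ℝ)))
    (a ghat G : ℕ → Ω → EuclideanSpace ℝ (Fin n))
    (ha0 : ∀ ω, a 0 ω ∈ box)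
    (hameas : ∀ t, StronglyMeasurable[ℱ t] (a t))
    (hg2 : ∀ t < T, MemLp (ghat t) 2 ℙ)
    (hgcond : ∀ t < T, (ℙ[ghat t | ℱ t]) =ᵐ[ℙ] fun ω => gradient fμ (a t ω))
    (hrec : ∀ t < T, ∀ ω, a (t + 1) ω = clamp01 n (a t ω - η t • ghat t ω))
    (hG : ∀ t < T, ∀ ω, G t ω = (η t)⁻¹ • (a t ω - a (t + 1) ω)) :
    ∑ t ∈ Finset.range T, (2 * η t - (L₂ : ℝ) * η t ^ 2) * (∫ ω, ‖G t ω‖ ^ 2 ∂ℙ) ≤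
      2 * ∑ t ∈ Finset.range T, η t * (∫ ω, ‖ghat t ω - gradient fμ (a t ω)‖ ^ 2 ∂ℙ)
        + 2 * μ ^ 2 * (L₂ : ℝ) + 2 * ((∫ ω, f (a 0 ω) ∂ℙ) - f astar) := by
  subst hbox
  have hν := ae_norm_le_one_ballUniform n
  have hfμ_eq : fμ = smoothing (ballUniform n) μ f := funext hfμ
  have hfμ_lip : LipschitzWith L₁ fμ := hfμ_eq ▸ lipschitzWith_smoothing hν hf
  have hfμ_grad : LipschitzWith L₂ (gradient fμ) :=
    hfμ_eq ▸ lipschitzWith_gradient_smoothing hν hf hdiff hgrad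
  have hfμ_diff : Differentiable ℝ fμ :=
    hfμ_eq ▸ differentiable_smoothing hν hf hdiff hgrad.continuous
  have hbias (x : EuclideanSpace ℝ (Fin n)) : |fμ x - f x| ≤ L₂ / 2 * μ ^ 2 :=
    hfμ_eq ▸ abs_smoothing_sub_le hν hf hdiff hgrad (integral_id_ballUniform n) x
  have hbox : ∀ t ≤ T, ∀ ω, a t ω ∈ {x : EuclideanSpace ℝ (Fin n) | ∀ i, x i ∈ Set.Icc 0 1} := by
    rintro (_ | s) hs ω
    exacts [ha0 ω, hrec s hs ω ▸ clamp01_mem_Icc _]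
  have hint {g : EuclideanSpace ℝ (Fin n) → ℝ} {K : ℝ≥0} (hg : LipschitzWith K g) (t : ℕ)
      (ht : t ≤ T) : Integrable (fun ω => g (a t ω)) ℙ :=
    hg.integrable_comp_of_ae_norm_le ((hameas t).mono (ℱ.le t)).aestronglyMeasurable
      (ae_of_all _ fun ω => norm_le_sqrt_of_forall_mem_Icc (hbox t ht ω))
  have hdescent := sum_mul_integral_norm_sq_le_of_projected_step ℱ hfμ_lip hfμ_diff hfμ_grad
    lipschitzWith_clamp01 (fun _ hx => inner_sub_clamp01_nonpos hx) (fun t ht => (hη t ht).1)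
    (fun t ht => hbox t ht.le) (fun t _ => hameas t) hg2 hgcond hrec hG (hint hfμ_lip)
  have hends := integral_sub_integral_le_of_abs_sub_le hbias (hint hfμ_lip 0 T.zero_le)
    (hint hfμ_lip T le_rfl) (hint hf 0 T.zero_le) fun ω => hmin _ (hbox T le_rfl ω)
  linarith

/-- Lemma 3: descent bound for the zeroth-order projected stochastic gradient
iteration `a_{t+1} = P_{[0,1]}(a_t - η_t ĝ_t)` with conditionally unbiased
stochastic gradients `E[ĝ_t | ℱ_t] = ∇f_μ(a_t)`, step sizes `η_t ∈ (0, 1/L₂)`,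
and rectified gradients `G_t = (a_t - a_{t+1})/η_t`:
`∑_t (2η_t - L₂ η_t²) E[‖G_t‖²]
  ≤ 2 ∑_t η_t E[‖ĝ_t - ∇f_μ(a_t)‖²] + 2μ² L₂ + 2(E[f(a₀)] - f(a*))`. -/
theorem zeroth_order_pgd_descent_bound
    {Ω : Type*} {mΩ : MeasurableSpace Ω} (ℙ : Measure Ω) [IsProbabilityMeasure ℙ]
    (n : ℕ) (hn : 1 ≤ n)
    (f : EuclideanSpace ℝ (Fin n) → ℝ)
    (L₁ L₂ : NNReal)
    (hf : LipschitzWith L₁ f)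
    (hdiff : Differentiable ℝ f)
    (hgrad : LipschitzWith L₂ (gradient f))
    (μ : ℝ) (hμ : 0 < μ)
    (fμ : EuclideanSpace ℝ (Fin n) → ℝ)
    (hfμ : ∀ x, fμ x = ∫ v, f (x + μ • v) ∂(ballUniform n))
    (box : Set (EuclideanSpace ℝ (Fin n)))
    (hbox : box = {x | ∀ i, x i ∈ Set.Icc (0 : ℝ) 1})
    (astar : EuclideanSpace ℝ (Fin n))
    (hastar : astar ∈ box) (hmin : ∀ x ∈ box, f astar ≤ f x)
    (ℱ : Filtration ℕ mΩ) (T : ℕ)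
    (η : ℕ → ℝ) (hη : ∀ t < T, η t ∈ Set.Ioo (0 : ℝ) (1 / (L₂ : ℝ)))
    (a ghat G : ℕ → Ω → EuclideanSpace ℝ (Fin n))
    (ha0 : ∀ ω, a 0 ω ∈ box)
    (hameas : ∀ t, StronglyMeasurable[ℱ t] (a t))
    (hg2 : ∀ t < T, MemLp (ghat t) 2 ℙ)
    (hgcond : ∀ t < T, (ℙ[ghat t | ℱ t]) =ᵐ[ℙ] fun ω => gradient fμ (a t ω))
    (hrec : ∀ t < T, ∀ ω, a (t + 1) ω = clamp01 n (a t ω - η t • ghat t ω))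
    (hG : ∀ t < T, ∀ ω, G t ω = (η t)⁻¹ • (a t ω - a (t + 1) ω)) :
    ∑ t ∈ Finset.range T, (2 * η t - (L₂ : ℝ) * η t ^ 2) * (∫ ω, ‖G t ω‖ ^ 2 ∂ℙ) ≤
      2 * ∑ t ∈ Finset.range T, η t * (∫ ω, ‖ghat t ω - gradient fμ (a t ω)‖ ^ 2 ∂ℙ)
        + 2 * μ ^ 2 * (L₂ : ℝ) + 2 * ((∫ ω, f (a 0 ω) ∂ℙ) - f astar) :=
  zeroth_order_pgd_descent_bound_general ℙ n f L₁ L₂ hf hdiff hgrad μ fμ hfμ box hbox astar hmin ℱ T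
    η hη a ghat G ha0 hameas hg2 hgcond hrec hG
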